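/- arXiv:2512.06166 — 3 statements merged into one kernel-verified Lean document; each statement's English description precedes it below -/
import Mathlib

section
/- Let M_d = I_{d+1} + 𝟙𝟙ᵗ and K_d be the (d+1)×(d+1) symmetric matrix with block form K_d = [[d, −𝟙_dᵗ],[−𝟙_d, I_d]]. Then K_d is positive semidefinite and the largest generalized eigenvalue λ_max(M_d^{-1} K_d) equals d + 1; equivalently, vᵗ K_d v ≤ (d+1) vᵗ M_d v for all v ∈ ℝ^{d+1}, with equality attained for some nonzero v. -/
open Matrix

/-- The reference P1 stiffness matrix `K_d = [[d, -𝟙ᵗ],[-𝟙, I_d]]` on `Fin (d+1)`,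
indexing the (0,0) entry by `0`. -/
def refStiffness (d : ℕ) : Matrix (Fin (d + 1)) (Fin (d + 1)) ℝ :=
  Matrix.of fun i j =>
    if i = 0 then (if j = 0 then (d : ℝ) else -1)
    else (if j = 0 then -1 else (if i = j then 1 else 0))

/-- The reference P1 mass matrix (unscaled) `M_d = I_{d+1} + 𝟙𝟙ᵗ`. -/
def refMass (d : ℕ) : Matrix (Fin (d + 1)) (Fin (d + 1)) ℝ :=
  1 + Matrix.of fun _ _ => (1 : ℝ)

lemma refStiffness_quad (d : ℕ) (v : Fin (d + 1) → ℝ) :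
    v ⬝ᵥ (refStiffness d *ᵥ v) = ∑ i : Fin d, (v i.succ - v 0) ^ 2 := by
  simp only [dotProduct, mulVec, refStiffness, Matrix.of_apply, Fin.sum_univ_succ,
    Fin.succ_ne_zero, if_false, if_true, ite_true, ite_false, Fin.succ_inj, if_pos rfl,
    ite_mul, zero_mul, one_mul, neg_mul, Finset.sum_ite_eq, Finset.mem_univ]
  simp only [sub_sq, mul_add, mul_neg, Finset.sum_add_distrib, Finset.sum_sub_distrib,
    Finset.sum_neg_distrib, ← Finset.mul_sum, ← Finset.sum_mul, Finset.sum_const,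
    Finset.card_univ, Fintype.card_fin, nsmul_eq_mul]
  ring

lemma refMass_quad (d : ℕ) (v : Fin (d + 1) → ℝ) :
    v ⬝ᵥ (refMass d *ᵥ v) = ∑ i, (v i) ^ 2 + (∑ i, v i) ^ 2 := by
  simp only [dotProduct, mulVec, refMass, Matrix.add_apply, Matrix.one_apply, Matrix.of_apply,
    add_mul, ite_mul, zero_mul, one_mul, Finset.sum_add_distrib, Finset.sum_ite_eq,
    Finset.mem_univ, if_true, mul_add, ← Finset.mul_sum, ← Finset.sum_mul]
  ring

/-- `K_d` is positive semidefinite and the largest generalized eigenvalue of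
`M_d⁻¹ K_d` equals `d+1`: `vᵗ K_d v ≤ (d+1) vᵗ M_d v` for all `v`, with equality for some
nonzero `v`. -/
theorem ref_stiffness_mass_generalized_eigenvalue (d : ℕ) (hd : 1 ≤ d) :
    (∀ v : Fin (d + 1) → ℝ, 0 ≤ v ⬝ᵥ (refStiffness d *ᵥ v)) ∧
    (∀ v : Fin (d + 1) → ℝ,
      v ⬝ᵥ (refStiffness d *ᵥ v) ≤ ((d : ℝ) + 1) * (v ⬝ᵥ (refMass d *ᵥ v))) ∧
    (∃ v : Fin (d + 1) → ℝ, v ≠ 0 ∧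
      v ⬝ᵥ (refStiffness d *ᵥ v) = ((d : ℝ) + 1) * (v ⬝ᵥ (refMass d *ᵥ v))) := by
  refine ⟨fun v => ?_, fun v => ?_, ?_⟩
  · rw [refStiffness_quad]
    exact Finset.sum_nonneg fun i _ => sq_nonneg _
  · rw [refStiffness_quad, refMass_quad]
    set s := ∑ i : Fin d, v i.succ with hs
    set q := ∑ i : Fin d, (v i.succ) ^ 2 with hq
    have hL : ∑ i : Fin d, (v i.succ - v 0) ^ 2 = q - 2 * v 0 * s + d * (v 0) ^ 2 := by
      simp only [sub_sq, Finset.sum_add_distrib, Finset.sum_sub_distrib,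
        ← Finset.mul_sum, ← Finset.sum_mul, Finset.sum_const,
        Finset.card_univ, Fintype.card_fin, nsmul_eq_mul, hs, hq]
      ring
    have hsum : ∑ i : Fin (d + 1), v i = v 0 + s := by rw [Fin.sum_univ_succ]
    have hsq : ∑ i : Fin (d + 1), (v i) ^ 2 = (v 0) ^ 2 + q := by rw [Fin.sum_univ_succ]
    rw [hL, hsum, hsq]
    have hcs : s ^ 2 ≤ (d : ℝ) * q := by
      have := sq_sum_le_card_mul_sum_sq (s := (Finset.univ : Finset (Fin d)))
        (f := fun i => v i.succ)
      simpa [hs, hq] using this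
    have hq0 : 0 ≤ q := Finset.sum_nonneg fun i _ => sq_nonneg _
    nlinarith [sq_nonneg (v 0 + s), sq_nonneg (v 0), mul_nonneg (Nat.cast_nonneg (α := ℝ) d) (sq_nonneg (v 0 + s))]
  · refine ⟨fun i => if i = 0 then (d : ℝ) else -1, ?_, ?_⟩
    · intro h
      have h0 := congrFun h 0
      simp at h0
      omega
    · rw [refStiffness_quad, refMass_quad]
      simp only [Fin.sum_univ_succ, Fin.succ_ne_zero, if_false, if_pos rfl,
        Finset.sum_const, Finset.card_univ, Fintype.card_fin, nsmul_eq_mul]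
      push_cast
      ring
end

section
/- On the reference d-simplex τ̂ = { x ∈ ℝ^d : x_i > 0, ∑ x_i < 1 }, every affine function v satisfies |v|_{H¹(τ̂)} ≤ (d+1)(d+2)^{1/2} ‖v‖_{L²(τ̂)}, and this constant is sharp: sup over nonzero affine v of |v|_{H¹(τ̂)}/‖v‖_{L²(τ̂)} equals (d+1)√(d+2). -/
open MeasureTheory Metric Set

/-- The open reference d-simplex `{x : x_i > 0, ∑ x_i < 1}`. -/
def refSimplex (d : ℕ) : Set (EuclideanSpace ℝ (Fin d)) :=
  {x | (∀ i, 0 < x i) ∧ ∑ i, x i < 1}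

/-!
Write `v x = ∑ aᵢ xᵢ + c` and `S = ∑ aᵢ`, `Q = ∑ aᵢ²`. Dirichlet's integrals
`∫ ∏ xᵢ ^ kᵢ = ∏ kᵢ! / (d + ∑ kᵢ)!` over the simplex give `|v|²_{H¹} = Q / d!` and
`‖v‖²_{L²} = (Q + S² + 2(d+2) c S + (d+1)(d+2) c²) / (d+2)!`, hence
`(d+1)²(d+2) ‖v‖² - |v|²_{H¹} = ((d Q - S²) + (d+2) (S + (d+1) c)²) / d!`.
This is nonnegative by Cauchy–Schwarz and vanishes for `aᵢ = 1`, `c = -d/(d+1)`.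
-/

open Finset
open scoped Nat

theorem integral_pow_mul_one_sub_pow (m n : ℕ) :
    ∫ x in (0:ℝ)..1, x ^ m * (1 - x) ^ n = (m ! * n ! : ℝ) / (m + n + 1)! := by
  have hbeta := Complex.betaIntegral_eq_Gamma_mul_div (m + 1) (n + 1)
    (by simp; positivity) (by simp; positivity)
  have hreal : Complex.betaIntegral (m + 1) (n + 1)
      = ((∫ x in (0:ℝ)..1, x ^ m * (1 - x) ^ n : ℝ) : ℂ) := by
    rw [Complex.betaIntegral, ← intervalIntegral.integral_ofReal]
    congr 1 with x
    push_cast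
    simp only [add_sub_cancel_right]
    norm_cast
  rw [hreal, show (m:ℂ) + 1 + (n + 1) = ((m + n + 1 : ℕ) : ℂ) + 1 by push_cast; ring,
    Complex.Gamma_nat_eq_factorial, Complex.Gamma_nat_eq_factorial,
    Complex.Gamma_nat_eq_factorial] at hbeta
  apply Complex.ofReal_injective
  rw [hbeta]
  push_cast
  rfl

theorem integral_pow_mul_sub_pow (m n : ℕ) (s : ℝ) :
    ∫ t in (0:ℝ)..s, t ^ m * (s - t) ^ n
      = s ^ (m + n + 1) * ((m ! * n ! : ℝ) / (m + n + 1)!) := by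
  have hsub := intervalIntegral.smul_integral_comp_mul_left
    (fun t => t ^ m * (s - t) ^ n) s (a := 0) (b := 1)
  simp only [mul_zero, mul_one, smul_eq_mul] at hsub
  rw [← hsub, ← integral_pow_mul_one_sub_pow, ← intervalIntegral.integral_const_mul,
    ← intervalIntegral.integral_const_mul]
  refine intervalIntegral.integral_congr fun u _ => ?_
  rw [show s - s * u = s * (1 - u) by ring, mul_pow, mul_pow]
  ring

/-- `refSimplex d` scaled by `s`, in the coordinates `Fin d → ℝ` where Fubini is available. -/
def cornerSimplex (d : ℕ) (s : ℝ) : Set (Fin d → ℝ) :=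
  {x | (∀ i, 0 < x i) ∧ ∑ i, x i < s}

theorem measurableSet_cornerSimplex (d : ℕ) (s : ℝ) : MeasurableSet (cornerSimplex d s) := by
  rw [cornerSimplex, ofPred_and, ofPred_forall]
  exact (MeasurableSet.iInter fun i => measurableSet_lt measurable_const (measurable_pi_apply i))
    |>.inter (measurableSet_lt (by fun_prop) measurable_const)

theorem cornerSimplex_subset_Icc (d : ℕ) (s : ℝ) : cornerSimplex d s ⊆ Icc 0 (fun _ => s) :=
  fun _ ⟨hpos, hsum⟩ => ⟨fun i => (hpos i).le, fun i =>
    (single_le_sum (fun j _ => (hpos j).le) (mem_univ i)).trans hsum.le⟩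

theorem Continuous.integrableOn_cornerSimplex {d : ℕ} {f : (Fin d → ℝ) → ℝ}
    (hf : Continuous f) (s : ℝ) : IntegrableOn f (cornerSimplex d s) :=
  (hf.continuousOn.integrableOn_compact isCompact_Icc).mono_set (cornerSimplex_subset_Icc d s)

theorem cornerSimplex_zero {s : ℝ} (hs : 0 < s) : cornerSimplex 0 s = univ := by
  ext x; simp [cornerSimplex, hs]

theorem cons_mem_cornerSimplex_iff {d : ℕ} {s t : ℝ} {y : Fin d → ℝ} :
    (Fin.cons t y : Fin (d + 1) → ℝ) ∈ cornerSimplex (d + 1) s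
      ↔ t ∈ Ioo 0 s ∧ y ∈ cornerSimplex d (s - t) := by
  simp only [cornerSimplex, mem_ofPred_eq, Fin.forall_fin_succ, Fin.cons_zero, Fin.cons_succ,
    Fin.sum_univ_succ, Set.mem_Ioo]
  constructor
  · rintro ⟨⟨ht, hy⟩, hsum⟩
    have : 0 ≤ ∑ j, y j := sum_nonneg fun j _ => (hy j).le
    exact ⟨⟨ht, by linarith⟩, hy, by linarith⟩
  · rintro ⟨⟨ht, -⟩, hy, hsum⟩
    exact ⟨⟨ht, hy⟩, by linarith⟩

theorem integral_eq_integral_integral_cons {d : ℕ} {F : (Fin (d + 1) → ℝ) → ℝ}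
    (hF : Integrable F) : ∫ x, F x = ∫ t, ∫ y, F (Fin.cons t y) := by
  have he := (volume_preserving_piFinSuccAbove (fun _ : Fin (d + 1) => ℝ) 0).symm
  rw [← he.integral_comp (MeasurableEquiv.measurableEmbedding _), Measure.volume_eq_prod,
    integral_prod]
  · simp [MeasurableEquiv.piFinSuccAbove, Fin.consEquiv]
  · rw [← Measure.volume_eq_prod]
    exact (he.integrable_comp_emb (MeasurableEquiv.measurableEmbedding _)).2 hF

theorem indicator_cornerSimplex_prod_pow_cons {d : ℕ} (k : Fin (d + 1) → ℕ) (s t : ℝ)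
    (y : Fin d → ℝ) :
    (cornerSimplex (d + 1) s).indicator (fun x => ∏ i, x i ^ k i) (Fin.cons t y)
      = (Ioo 0 s).indicator (· ^ k 0) t
        * (cornerSimplex d (s - t)).indicator (fun y => ∏ j, y j ^ k j.succ) y := by
  by_cases hc : (Fin.cons t y : Fin (d + 1) → ℝ) ∈ cornerSimplex (d + 1) s
  · obtain ⟨ht, hy⟩ := cons_mem_cornerSimplex_iff.1 hc
    rw [indicator_of_mem hc, indicator_of_mem ht, indicator_of_mem hy, Fin.prod_univ_succ]
    simp
  · rw [indicator_of_notMem hc]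
    by_cases ht : t ∈ Ioo 0 s
    · rw [indicator_of_notMem fun hy => hc (cons_mem_cornerSimplex_iff.2 ⟨ht, hy⟩), mul_zero]
    · rw [indicator_of_notMem ht, zero_mul]

/-- Dirichlet's integral. The scale `s` is carried through the induction because slicing off
the first coordinate `t` leaves the fibre `cornerSimplex d (s - t)`. -/
theorem setIntegral_cornerSimplex_prod_pow (d : ℕ) (k : Fin d → ℕ) {s : ℝ} (hs : 0 < s) :
    ∫ x in cornerSimplex d s, ∏ i, x i ^ k i
      = s ^ (d + ∑ i, k i) * ((∏ i, ((k i)! : ℝ)) / (d + ∑ i, k i)!) := by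
  induction d generalizing s with
  | zero => simp [cornerSimplex_zero hs, volume_pi, Measure.real]
  | succ d ih =>
    set K := ∑ j : Fin d, k j.succ
    set C : ℝ := (∏ j : Fin d, ((k j.succ)! : ℝ)) / (d + K)!
    have hinner (t : ℝ) : (Ioo 0 s).indicator (· ^ k 0) t
          * ∫ y in cornerSimplex d (s - t), ∏ j, y j ^ k j.succ
        = (Ioo 0 s).indicator (fun t => t ^ k 0 * (s - t) ^ (d + K) * C) t := by
      by_cases ht : t ∈ Ioo 0 s
      · rw [indicator_of_mem ht, indicator_of_mem ht, ih _ (sub_pos.2 ht.2), mul_assoc]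
      · rw [indicator_of_notMem ht, indicator_of_notMem ht, zero_mul]
    rw [← integral_indicator (measurableSet_cornerSimplex _ _), integral_eq_integral_integral_cons
      ((Continuous.integrableOn_cornerSimplex (by fun_prop) s).integrable_indicator
        (measurableSet_cornerSimplex _ _))]
    simp_rw [indicator_cornerSimplex_prod_pow_cons, integral_const_mul,
      integral_indicator (measurableSet_cornerSimplex _ _), hinner]
    rw [integral_indicator measurableSet_Ioo, ← integral_Ioc_eq_integral_Ioo,
      ← intervalIntegral.integral_of_le hs.le, intervalIntegral.integral_mul_const,
      integral_pow_mul_sub_pow, Fin.sum_univ_succ, Fin.prod_univ_succ]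
    rw [show d + 1 + (k 0 + K) = k 0 + (d + K) + 1 by ring]
    simp only [C]
    field_simp

theorem measureReal_cornerSimplex (d : ℕ) {s : ℝ} (hs : 0 < s) :
    volume.real (cornerSimplex d s) = s ^ d / d ! := by
  simpa [div_eq_mul_inv] using setIntegral_cornerSimplex_prod_pow d 0 hs

theorem setIntegral_cornerSimplex_pow_coord {d : ℕ} (i : Fin d) (m : ℕ) :
    ∫ x in cornerSimplex d 1, x i ^ m = (m ! : ℝ) / (d + m)! := by
  simpa [Pi.single_apply, pow_ite, apply_ite Nat.factorial, Nat.cast_ite] using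
    setIntegral_cornerSimplex_prod_pow d (Pi.single i m) one_pos

theorem setIntegral_cornerSimplex_coord {d : ℕ} (i : Fin d) :
    ∫ x in cornerSimplex d 1, x i = 1 / ((d + 1)! : ℝ) := by
  simpa using setIntegral_cornerSimplex_pow_coord i 1

theorem setIntegral_cornerSimplex_coord_mul_coord {d : ℕ} (i j : Fin d) :
    ∫ x in cornerSimplex d 1, x i * x j = (if i = j then 2 else 1) / ((d + 2)! : ℝ) := by
  split_ifs with hij
  · subst hij
    simpa [← sq] using setIntegral_cornerSimplex_pow_coord i 2
  · have := setIntegral_cornerSimplex_prod_pow d (Pi.single i 1 + Pi.single j 1) one_pos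
    have hfac : ∏ l, ((((Pi.single i 1 + Pi.single j 1 : Fin d → ℕ) l)! : ℕ) : ℝ) = 1 :=
      prod_eq_one fun l _ => by by_cases l = i <;> by_cases l = j <;> simp_all [Pi.single_apply]
    rw [hfac] at this
    simp only [Pi.add_apply, pow_add, prod_mul_distrib, Pi.single_apply, pow_ite, pow_one, pow_zero,
      Fintype.prod_ite_eq', sum_add_distrib, Fintype.sum_ite_eq'] at this
    simpa using this

theorem sq_sum_mul_add {ι : Type*} [Fintype ι] (a y : ι → ℝ) (c : ℝ) :
    (∑ i, a i * y i + c) ^ 2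
      = ∑ i, ∑ j, a i * a j * (y i * y j) + (∑ i, 2 * c * a i * y i + c ^ 2) := by
  have hsq : (∑ i, a i * y i) ^ 2 = ∑ i, ∑ j, a i * a j * (y i * y j) := by
    rw [sq, sum_mul_sum]
    exact sum_congr rfl fun i _ => sum_congr rfl fun j _ => by ring
  have hlin : 2 * (∑ i, a i * y i) * c = ∑ i, 2 * c * a i * y i := by
    rw [mul_sum, sum_mul]
    exact sum_congr rfl fun i _ => by ring
  rw [add_sq, hsq, hlin, add_assoc]

theorem sum_sum_mul_ite_two_one {ι : Type*} [Fintype ι] [DecidableEq ι] (a : ι → ℝ) :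
    ∑ i, ∑ j, a i * a j * (if i = j then 2 else 1) = ∑ i, a i ^ 2 + (∑ i, a i) ^ 2 := by
  have hterm (i j : ι) :
      a i * a j * (if i = j then 2 else 1) = a i * a j + if i = j then a i * a j else 0 := by
    split_ifs <;> ring
  simp_rw [hterm, sum_add_distrib, Fintype.sum_ite_eq, ← sum_mul_sum, sq]
  ring

theorem setIntegral_cornerSimplex_sq_affine {d : ℕ} (a : Fin d → ℝ) (c : ℝ) :
    ∫ y in cornerSimplex d 1, (∑ i, a i * y i + c) ^ 2
      = (∑ i, a i ^ 2 + (∑ i, a i) ^ 2 + 2 * (d + 2) * c * ∑ i, a i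
          + (d + 1) * (d + 2) * c ^ 2) / (d + 2)! := by
  have hint {f : (Fin d → ℝ) → ℝ} (hf : Continuous f) := hf.integrableOn_cornerSimplex 1
  have hquad (i : Fin d) : ∫ y in cornerSimplex d 1, ∑ j, a i * a j * (y i * y j)
      = (∑ j, a i * a j * (if i = j then 2 else 1)) / (d + 2)! := by
    rw [integral_finsetSum _ fun j _ => hint (by fun_prop), sum_div]
    simp_rw [integral_const_mul, setIntegral_cornerSimplex_coord_mul_coord, mul_div_assoc]
  simp_rw [sq_sum_mul_add]
  rw [integral_add (hint (by fun_prop)) (hint (by fun_prop)),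
    integral_add (hint (by fun_prop)) (hint (by fun_prop)),
    integral_finsetSum _ fun i _ => hint (by fun_prop),
    integral_finsetSum _ fun i _ => hint (by fun_prop)]
  simp_rw [hquad, ← sum_div, sum_sum_mul_ite_two_one, integral_const_mul,
    setIntegral_cornerSimplex_coord, setIntegral_const, measureReal_cornerSimplex d one_pos]
  rw [Nat.factorial_succ (d + 1), Nat.factorial_succ d]
  simp only [one_pow, smul_eq_mul, ← mul_sum, ← sum_mul]
  push_cast
  field_simp
  ring

theorem setIntegral_refSimplex (d : ℕ) (g : EuclideanSpace ℝ (Fin d) → ℝ) :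
    ∫ x in refSimplex d, g x = ∫ y in cornerSimplex d 1, g (WithLp.toLp 2 y) :=
  (EuclideanSpace.volume_preserving_symm_measurableEquiv_toLp (Fin d)).setIntegral_preimage_emb
    (MeasurableEquiv.measurableEmbedding _) (fun y => g (WithLp.toLp 2 y)) (cornerSimplex d 1)

theorem AffineMap.apply_toLp_eq_sum {ι : Type*} [Fintype ι] [DecidableEq ι]
    (A : EuclideanSpace ℝ ι →ᵃ[ℝ] ℝ) (y : ι → ℝ) :
    A (WithLp.toLp 2 y) = ∑ i, A.linear (EuclideanSpace.single i 1) * y i + A 0 := by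
  conv_lhs => rw [A.decomp, ← (EuclideanSpace.basisFun ι ℝ).sum_repr (WithLp.toLp 2 y)]
  simp [map_sum, mul_comm]

theorem AffineMap.gradient_eq {E : Type*} [NormedAddCommGroup E] [InnerProductSpace ℝ E]
    [FiniteDimensional ℝ E] (A : E →ᵃ[ℝ] ℝ) (x : E) :
    gradient (fun y => A y) x
      = (InnerProductSpace.toDual ℝ E).symm (LinearMap.toContinuousLinearMap A.linear) := by
  have hA : HasFDerivAt (fun y => A y) (LinearMap.toContinuousLinearMap A.linear) x := by
    rw [A.decomp]
    exact (LinearMap.toContinuousLinearMap A.linear).hasFDerivAt.add_const (A 0)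
  rw [gradient, hA.fderiv]

theorem EuclideanSpace.norm_toDual_symm_sq {ι : Type*} [Fintype ι] [DecidableEq ι]
    (ℓ : StrongDual ℝ (EuclideanSpace ℝ ι)) :
    ‖(InnerProductSpace.toDual ℝ (EuclideanSpace ℝ ι)).symm ℓ‖ ^ 2
      = ∑ i, ℓ (EuclideanSpace.single i 1) ^ 2 := by
  rw [EuclideanSpace.norm_sq_eq]
  refine sum_congr rfl fun i _ => ?_
  rw [Real.norm_eq_abs, sq_abs, ← InnerProductSpace.toDual_symm_apply,
    EuclideanSpace.inner_single_right]
  simp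

theorem setIntegral_refSimplex_norm_gradient_sq {d : ℕ}
    (A : EuclideanSpace ℝ (Fin d) →ᵃ[ℝ] ℝ) :
    ∫ x in refSimplex d, ‖gradient (fun y => A y) x‖ ^ 2
      = (∑ i, A.linear (EuclideanSpace.single i 1) ^ 2) / d ! := by
  have hgrad (x : EuclideanSpace ℝ (Fin d)) : ‖gradient (fun y => A y) x‖ ^ 2
      = ∑ i, A.linear (EuclideanSpace.single i 1) ^ 2 := by
    rw [A.gradient_eq, EuclideanSpace.norm_toDual_symm_sq]
    rfl
  simp_rw [hgrad]
  rw [setIntegral_refSimplex, setIntegral_const, measureReal_cornerSimplex d one_pos, smul_eq_mul]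
  ring

theorem setIntegral_refSimplex_sq {d : ℕ} (A : EuclideanSpace ℝ (Fin d) →ᵃ[ℝ] ℝ) :
    ∫ x in refSimplex d, A x ^ 2
      = (∑ i, A.linear (EuclideanSpace.single i 1) ^ 2
          + (∑ i, A.linear (EuclideanSpace.single i 1)) ^ 2
          + 2 * (d + 2) * A 0 * ∑ i, A.linear (EuclideanSpace.single i 1)
          + (d + 1) * (d + 2) * A 0 ^ 2) / (d + 2)! := by
  rw [setIntegral_refSimplex, ← setIntegral_cornerSimplex_sq_affine]
  congr 1 with y
  rw [A.apply_toLp_eq_sum]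

theorem sum_sq_div_factorial_le (d : ℕ) (a : Fin d → ℝ) (c : ℝ) :
    (∑ i, a i ^ 2) / d ! ≤ ((d : ℝ) + 1) ^ 2 * (d + 2)
      * ((∑ i, a i ^ 2 + (∑ i, a i) ^ 2 + 2 * (d + 2) * c * ∑ i, a i
          + (d + 1) * (d + 2) * c ^ 2) / (d + 2)!) := by
  have hcs : (∑ i, a i) ^ 2 ≤ d * ∑ i, a i ^ 2 := by
    simpa using sq_sum_le_card_mul_sum_sq (s := univ) (f := a)
  set S := ∑ i, a i
  set Q := ∑ i, a i ^ 2
  calc Q / d ! ≤ Q / d ! + ((d * Q - S ^ 2) + (d + 2) * (S + (d + 1) * c) ^ 2) / d ! := by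
        have : 0 ≤ (d * Q - S ^ 2) + (d + 2) * (S + (d + 1) * c) ^ 2 := by
          nlinarith [sq_nonneg (S + (d + 1) * c)]
        exact le_add_of_nonneg_right (by positivity)
    _ = _ := by
        rw [Nat.factorial_succ (d + 1), Nat.factorial_succ d]
        push_cast
        field_simp
        ring

noncomputable def simplexExtremal (d : ℕ) : EuclideanSpace ℝ (Fin d) →ᵃ[ℝ] ℝ :=
  (∑ i, EuclideanSpace.proj i : EuclideanSpace ℝ (Fin d) →L[ℝ] ℝ).toLinearMap.toAffineMap
    + AffineMap.const ℝ _ (-((d : ℝ) / (d + 1)))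

theorem simplexExtremal_linear_single {d : ℕ} (i : Fin d) :
    (simplexExtremal d).linear (EuclideanSpace.single i 1) = 1 := by
  simp [simplexExtremal]

theorem simplexExtremal_zero (d : ℕ) : simplexExtremal d 0 = -(d / (d + 1)) := by
  simp [simplexExtremal]

theorem setIntegral_refSimplex_norm_gradient_sq_simplexExtremal (d : ℕ) :
    ∫ x in refSimplex d, ‖gradient (fun y => simplexExtremal d y) x‖ ^ 2 = d / d ! := by
  simp [setIntegral_refSimplex_norm_gradient_sq, simplexExtremal_linear_single]

theorem setIntegral_refSimplex_sq_simplexExtremal (d : ℕ) :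
    ∫ x in refSimplex d, simplexExtremal d x ^ 2 = d / ((d + 1) * (d + 2)!) := by
  simp only [setIntegral_refSimplex_sq, simplexExtremal_linear_single, simplexExtremal_zero,
    one_pow, sum_const, card_fin, nsmul_eq_mul, mul_one]
  field_simp
  ring

/-- the sharp inverse inequality on the reference simplex. Every affine
function `v` satisfies `|v|_{H¹(τ̂)} ≤ (d+1)√(d+2) ‖v‖_{L²(τ̂)}`, and the constant is
attained by some affine function that is nonzero in `L²`. -/
theorem ref_simplex_inverse_inequality (d : ℕ) (hd : 1 ≤ d) :
    (∀ A : EuclideanSpace ℝ (Fin d) →ᵃ[ℝ] ℝ,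
      Real.sqrt (∫ x in refSimplex d, ‖gradient (fun y => A y) x‖ ^ 2)
        ≤ ((d : ℝ) + 1) * Real.sqrt ((d : ℝ) + 2) *
            Real.sqrt (∫ x in refSimplex d, (A x) ^ 2)) ∧
    (∃ A : EuclideanSpace ℝ (Fin d) →ᵃ[ℝ] ℝ,
      (∫ x in refSimplex d, (A x) ^ 2) ≠ 0 ∧
      Real.sqrt (∫ x in refSimplex d, ‖gradient (fun y => A y) x‖ ^ 2)
        = ((d : ℝ) + 1) * Real.sqrt ((d : ℝ) + 2) *
            Real.sqrt (∫ x in refSimplex d, (A x) ^ 2)) := by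
  have hsqrt (X : ℝ) : ((d : ℝ) + 1) * Real.sqrt ((d : ℝ) + 2) * Real.sqrt X
      = Real.sqrt (((d : ℝ) + 1) ^ 2 * (d + 2) * X) := by
    rw [Real.sqrt_mul (by positivity), Real.sqrt_mul (by positivity), Real.sqrt_sq (by positivity)]
  refine ⟨fun A => ?_, simplexExtremal d, ?_, ?_⟩
  · rw [hsqrt, setIntegral_refSimplex_norm_gradient_sq, setIntegral_refSimplex_sq]
    exact Real.sqrt_le_sqrt (sum_sq_div_factorial_le d _ _)
  · have : (0 : ℝ) < d := by exact_mod_cast hd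
    rw [setIntegral_refSimplex_sq_simplexExtremal]
    positivity
  · rw [hsqrt, setIntegral_refSimplex_norm_gradient_sq_simplexExtremal,
      setIntegral_refSimplex_sq_simplexExtremal, Nat.factorial_succ (d + 1), Nat.factorial_succ d]
    push_cast
    congr 1
    field_simp
    ring
end

section
/- Let V be a real Hilbert space, V_1 ⊂ V_2 ⊂ ⋯ ⊂ V_J = V closed subspaces, Q_l the orthogonal projection onto V_l with Q_0 = 0, and h_1 > h_2 > ⋯ > h_J > 0 positive weights. Define B = ∑_{l=1}^J h_l² Q_l. Then B is self-adjoint positive definite on V, and for every v ∈ V, ⟨B^{-1} v, v⟩ = min { ∑_{l=1}^J h_l^{-2} ‖v_l‖² : v_l ∈ V_l, ∑_{l=1}^J v_l = v }. -/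
open scoped RealInnerProductSpace

private lemma bpx_amgm (c a b : ℝ) (hc : 0 < c) :
    a * b ≤ (c ^ 2 * a ^ 2 + (c ^ 2)⁻¹ * b ^ 2) / 2 := by
  have h1 : (0:ℝ) ≤ (c * a - c⁻¹ * b) ^ 2 := sq_nonneg _
  have h2 : (c * a - c⁻¹ * b) ^ 2 = c ^ 2 * a ^ 2 - 2 * (a * b) + (c ^ 2)⁻¹ * b ^ 2 := by
    field_simp
    ring
  have h3 := h2 ▸ h1
  linarith [h3]

/-- the BPX/parallel-subspace-correction identity. Let `V` be a real Hilbert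
space, `V_1 ⊆ ⋯ ⊆ V_J = V` closed subspaces with orthogonal projections `Q_l`, and
`h_1 > ⋯ > h_J > 0`. Then `B = ∑ h_l² Q_l` is self-adjoint positive definite, invertible,
and `⟨B⁻¹v, v⟩ = min { ∑ h_l⁻² ‖v_l‖² : v_l ∈ V_l, ∑ v_l = v }`. -/
theorem bpx_preconditioner_identity
    (V : Type*) [NormedAddCommGroup V] [InnerProductSpace ℝ V] [CompleteSpace V]
    (J : ℕ) (hJ : 1 ≤ J)
    (Vl : Fin J → Submodule ℝ V)
    (hclosed : ∀ l, IsClosed (Vl l : Set V))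
    (hnested : ∀ l l' : Fin J, l ≤ l' → Vl l ≤ Vl l')
    (htop : Vl ⟨J - 1, by omega⟩ = ⊤)
    (Q : Fin J → V →L[ℝ] V)
    (hQ : ∀ l, ∀ v : V, Q l v ∈ Vl l ∧ v - Q l v ∈ (Vl l)ᗮ)
    (h : Fin J → ℝ) (hpos : ∀ l, 0 < h l) (hanti : StrictAnti h)
    (B : V →L[ℝ] V) (hB : B = ∑ l : Fin J, (h l) ^ 2 • Q l) :
    (∀ u w : V, ⟪B u, w⟫ = ⟪u, B w⟫) ∧
    (∀ v : V, v ≠ 0 → 0 < ⟪B v, v⟫) ∧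
    (∃ Binv : V →L[ℝ] V, B.comp Binv = ContinuousLinearMap.id ℝ V ∧
        Binv.comp B = ContinuousLinearMap.id ℝ V ∧
        ∀ v : V, IsLeast
          {t : ℝ | ∃ w : Fin J → V, (∀ l, w l ∈ Vl l) ∧ (∑ l, w l) = v ∧
            t = ∑ l, ((h l) ^ 2)⁻¹ * ‖w l‖ ^ 2}
          ⟪Binv v, v⟫) := by
  have Qmem : ∀ l (v : V), Q l v ∈ Vl l := fun l v => (hQ l v).1
  have Qright : ∀ l (u w : V), w ∈ Vl l → ⟪u, w⟫ = ⟪Q l u, w⟫ := by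
    intro l u w hw
    have h0 : ⟪w, u - Q l u⟫ = 0 := (Submodule.mem_orthogonal _ _).1 (hQ l u).2 w hw
    rw [inner_sub_right] at h0
    have e1 := real_inner_comm w u
    have e2 := real_inner_comm w (Q l u)
    linarith
  have Qsym : ∀ l (u w : V), ⟪Q l u, w⟫ = ⟪u, Q l w⟫ := by
    intro l u w
    calc ⟪Q l u, w⟫ = ⟪w, Q l u⟫ := real_inner_comm _ _
      _ = ⟪Q l w, Q l u⟫ := Qright l w (Q l u) (Qmem l u)
      _ = ⟪Q l u, Q l w⟫ := real_inner_comm _ _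
      _ = ⟪u, Q l w⟫ := (Qright l u (Q l w) (Qmem l w)).symm
  have Qnorm : ∀ l (u : V), ⟪Q l u, u⟫ = ‖Q l u‖ ^ 2 := by
    intro l u
    rw [real_inner_comm, Qright l u (Q l u) (Qmem l u), real_inner_self_eq_norm_sq]
  have Bapply : ∀ u : V, B u = ∑ l, h l ^ 2 • Q l u := by
    intro u; rw [hB]; simp
  have Binner : ∀ u w : V, ⟪B u, w⟫ = ∑ l, h l ^ 2 * ⟪Q l u, w⟫ := by
    intro u w; rw [Bapply, sum_inner]
    exact Finset.sum_congr rfl fun l _ => real_inner_smul_left _ _ _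
  have Bquad : ∀ v : V, ⟪B v, v⟫ = ∑ l, h l ^ 2 * ‖Q l v‖ ^ 2 := by
    intro v; rw [Binner]
    exact Finset.sum_congr rfl fun l _ => by rw [Qnorm]
  have selfadj : ∀ u w : V, ⟪B u, w⟫ = ⟪u, B w⟫ := by
    intro u w
    calc ⟪B u, w⟫ = ∑ l, h l ^ 2 * ⟪Q l u, w⟫ := Binner u w
      _ = ∑ l, h l ^ 2 * ⟪Q l w, u⟫ :=
          Finset.sum_congr rfl fun l _ => by rw [Qsym, real_inner_comm]
      _ = ⟪B w, u⟫ := (Binner w u).symm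
      _ = ⟪u, B w⟫ := real_inner_comm _ _
  set L : Fin J := ⟨J - 1, by omega⟩ with hL
  have QL : ∀ v : V, Q L v = v := by
    intro v
    have h2 := (hQ L v).2
    rw [htop, Submodule.top_orthogonal_eq_bot, Submodule.mem_bot] at h2
    exact (sub_eq_zero.mp h2).symm
  have coerc : ∀ v : V, h L ^ 2 * ‖v‖ ^ 2 ≤ ⟪B v, v⟫ := by
    intro v
    rw [Bquad]
    have he : h L ^ 2 * ‖v‖ ^ 2 = h L ^ 2 * ‖Q L v‖ ^ 2 := by rw [QL]
    rw [he]
    exact Finset.single_le_sum (f := fun l => h l ^ 2 * ‖Q l v‖ ^ 2)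
      (fun l _ => by positivity) (Finset.mem_univ L)
  have posdef : ∀ v : V, v ≠ 0 → 0 < ⟪B v, v⟫ := by
    intro v hv
    have h1 : 0 < ‖v‖ := norm_pos_iff.mpr hv
    have h2 : 0 < h L ^ 2 * ‖v‖ ^ 2 :=
      mul_pos (pow_pos (hpos L) 2) (pow_pos h1 2)
    linarith [coerc v]
  -- bilinear form for Lax-Milgram
  set Lmap : V →ₗ[ℝ] (V →L[ℝ] ℝ) :=
    { toFun := fun u => innerSL ℝ (B u)
      map_add' := fun x y => by ext w; simp [inner_add_left]
      map_smul' := fun c x => by ext w; simp [real_inner_smul_left] } with hLmap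
  have Lbound : ∀ u : V, ‖Lmap u‖ ≤ ‖B‖ * ‖u‖ := by
    intro u
    have he : Lmap u = innerSL ℝ (B u) := rfl
    calc ‖Lmap u‖ = ‖B u‖ := by rw [he]; exact innerSL_apply_norm (𝕜 := ℝ) (B u)
      _ ≤ ‖B‖ * ‖u‖ := B.le_opNorm u
  set Bb : V →L[ℝ] V →L[ℝ] ℝ := Lmap.mkContinuous ‖B‖ Lbound with hBb
  have Bb_apply : ∀ u w : V, Bb u w = ⟪B u, w⟫ := fun u w => rfl
  have coercive : IsCoercive Bb := by
    refine ⟨h L ^ 2, pow_pos (hpos L) 2, fun u => ?_⟩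
    rw [Bb_apply]
    calc h L ^ 2 * ‖u‖ * ‖u‖ = h L ^ 2 * ‖u‖ ^ 2 := by ring
      _ ≤ ⟪B u, u⟫ := coerc u
  set E := coercive.continuousLinearEquivOfBilin with hE
  have EB : ∀ v : V, E v = B v := by
    intro v
    exact ext_inner_right ℝ fun w => coercive.continuousLinearEquivOfBilin_apply v w
  refine ⟨selfadj, posdef, E.symm.toContinuousLinearMap, ?_, ?_, ?_⟩
  · ext v
    show B (E.symm v) = v
    rw [← EB]; exact E.apply_symm_apply v
  · ext v
    show E.symm (B v) = v
    rw [← EB]; exact E.symm_apply_apply v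
  · intro v
    set u : V := E.symm v with hu
    have hBu : B u = v := by rw [← EB]; exact E.apply_symm_apply v
    have hval : (⟪(E.symm.toContinuousLinearMap : V →L[ℝ] V) v, v⟫ : ℝ) = ⟪u, v⟫ := by
      rw [ContinuousLinearEquiv.coe_coe]
    clear_value u
    have huv : ⟪u, v⟫ = ∑ l, h l ^ 2 * ‖Q l u‖ ^ 2 := by
      rw [← hBu, real_inner_comm]; exact Bquad u
    constructor
    · refine ⟨fun l => h l ^ 2 • Q l u, fun l => Submodule.smul_mem _ _ (Qmem l u), ?_, ?_⟩
      · rw [← Bapply u, hBu]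
      · rw [hval, huv]
        refine Finset.sum_congr rfl fun l _ => ?_
        have hl : (0:ℝ) < h l := hpos l
        rw [norm_smul, Real.norm_eq_abs, abs_of_pos (pow_pos hl 2)]
        field_simp
    · rintro t ⟨w, hw, hsum, rfl⟩
      rw [hval, huv]
      have key : ∀ l, ⟪Q l u, w l⟫ ≤ (h l ^ 2 * ‖Q l u‖ ^ 2 + (h l ^ 2)⁻¹ * ‖w l‖ ^ 2) / 2 :=
        fun l => le_trans (real_inner_le_norm _ _) (bpx_amgm (h l) _ _ (hpos l))
      have sum1 : ∑ l, ⟪Q l u, w l⟫ = ⟪u, v⟫ := by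
        rw [← hsum, inner_sum]
        exact Finset.sum_congr rfl fun l _ => (Qright l u (w l) (hw l)).symm
      have sum2 : ∑ l, ⟪Q l u, w l⟫ ≤
          ((∑ l, h l ^ 2 * ‖Q l u‖ ^ 2) + ∑ l, (h l ^ 2)⁻¹ * ‖w l‖ ^ 2) / 2 := by
        calc ∑ l, ⟪Q l u, w l⟫
            ≤ ∑ l, (h l ^ 2 * ‖Q l u‖ ^ 2 + (h l ^ 2)⁻¹ * ‖w l‖ ^ 2) / 2 :=
              Finset.sum_le_sum fun l _ => key l
          _ = ((∑ l, h l ^ 2 * ‖Q l u‖ ^ 2) + ∑ l, (h l ^ 2)⁻¹ * ‖w l‖ ^ 2) / 2 := by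
              rw [← Finset.sum_div, Finset.sum_add_distrib]
      rw [sum1, huv] at sum2
      linarith only [sum2]
end
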